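/- Consider one inner loop of SARAH (SARAH-IN) with each f_i L-smooth and learning rate exactly η = 2 / ( L ( sqrt(1 + (4m/b)·((n−b)/(n−1))) + 1 ) ). If the output w̃ equals w_t with t chosen uniformly at random from {0,1,...,m}, then E[||∇P(w̃)||²] ≤ ( L ( sqrt(1 + (4m/b)·((n−b)/(n−1))) + 1 ) / (m+1) ) · [P(w_0) − P(w_*)], where w_* is a global minimizer of P. -/

import Mathlib

open scoped BigOperators

noncomputable section

/-- Vectors in `ℝ^d`. -/
abbrev Vec (d : ℕ) := EuclideanSpace ℝ (Fin d)

/-- The type of mini-batches of size `b` from `{1,…,n}` (modeled as `Fin n`). -/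
def Batch (n b : ℕ) : Type := {s : Finset (Fin n) // s.card = b}

instance (n b : ℕ) : Fintype (Batch n b) :=
  inferInstanceAs (Fintype {s : Finset (Fin n) // s.card = b})

/-- Expectation (uniform average) over a finite sample space. -/
def expec {Ω : Type*} [Fintype Ω] (F : Ω → ℝ) : ℝ :=
  (Fintype.card Ω : ℝ)⁻¹ * ∑ ω, F ω

/-- The SARAH-IN state `(w_t, v_t)` given a starting point `w0`, a learning rate `η`,
a batch size `b` and a sequence of mini-batches `I` (where `I t` is the batch used to
form `v_t`, for `t ≥ 1`). -/
def sarahState {d n : ℕ} (f : Fin n → Vec d → ℝ) (w0 : Vec d) (η : ℝ) (b : ℕ)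
    (I : ℕ → Finset (Fin n)) : ℕ → Vec d × Vec d
  | 0 => (w0, (n : ℝ)⁻¹ • ∑ i, gradient (f i) w0)
  | t + 1 =>
    let p := sarahState f w0 η b I t
    let w' := p.1 - η • p.2
    (w', (b : ℝ)⁻¹ • ∑ i ∈ I (t + 1), (gradient (f i) w' - gradient (f i) p.1) + p.2)

/-- Extend a finite sequence of mini-batches to all of `ℕ` (indices `≥ T` are irrelevant). -/
def pad {n b T : ℕ} (ω : Fin T → Batch n b) : ℕ → Finset (Fin n) :=
  fun t => if h : t < T then (ω ⟨t, h⟩).1 else ∅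

/-!
Along one inner loop, smoothness of `P` gives the inexact descent step
`P(w_{t+1}) ≤ P(w_t) - η/2 ‖∇P(w_t)‖² - η/2 (1 - Lη) ‖v_t‖² + η/2 ‖∇P(w_t) - v_t‖²`.
Conditioning on the past and averaging over the fresh mini-batch, the estimator error
`E‖∇P(w_t) - v_t‖²` starts at `0` and grows by at most `ρ L² η² E‖v_t‖²` per step, where
`ρ = (n - b)/(b (n - 1))` is the variance factor of sampling without replacement. Over the loop the
errors therefore cost at most `m ρ L² η² ∑ E‖v_t‖²`, and the chosen `η` is exactly the one with
`m ρ (Lη)² = 1 - Lη`, so they are paid for by the `‖v_t‖²` terms. Telescoping leaves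
`η/2 ∑_{t ≤ m} E‖∇P(w_t)‖² ≤ P(w₀) - P(w⋆)`.
-/

open Finset

open scoped RealInnerProductSpace

theorem card_filter_superset_powersetCard_mul_descFactorial {α : Type*} [DecidableEq α]
    {s t : Finset α} (hst : s ⊆ t) (k : ℕ) :
    #{x ∈ t.powersetCard k | s ⊆ x} * (#t).descFactorial #s
      = (#t).choose k * k.descFactorial #s := by
  rcases lt_or_ge k #s with hks | hsk
  · rw [Nat.descFactorial_eq_zero_iff_lt.2 hks, mul_zero, card_eq_zero.2, zero_mul]
    refine filter_false_of_mem fun x hx hsx => ?_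
    exact (card_le_card hsx).not_gt ((mem_powersetCard.1 hx).2 ▸ hks)
  rw [filter_powersetCard_subset s t k hst hsk,
    card_image_of_injOn fun x hx y hy => disjoint_injOn_union_left s
      (disjoint_of_subset_right (mem_powersetCard.1 hx).1 disjoint_sdiff)
      (disjoint_of_subset_right (mem_powersetCard.1 hy).1 disjoint_sdiff),
    card_powersetCard, card_sdiff_of_subset hst, Nat.descFactorial_eq_factorial_mul_choose,
    Nat.descFactorial_eq_factorial_mul_choose]
  linear_combination (#s).factorial * (Nat.choose_mul (n := #t) hsk).symm

section Expectation

variable {Ω : Type*} [Fintype Ω]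

theorem expec_add (F G : Ω → ℝ) : expec (fun ω => F ω + G ω) = expec F + expec G := by
  simp only [expec, sum_add_distrib, mul_add]

theorem expec_sub (F G : Ω → ℝ) : expec (fun ω => F ω - G ω) = expec F - expec G := by
  simp only [expec, sum_sub_distrib, mul_sub]

theorem expec_const_mul (r : ℝ) (F : Ω → ℝ) : expec (fun ω => r * F ω) = r * expec F := by
  simp only [expec, ← mul_sum]; ring

theorem expec_mul_const (r : ℝ) (F : Ω → ℝ) : expec (fun ω => F ω * r) = expec F * r := by
  simp only [expec, ← sum_mul]; ring

theorem expec_sum {ι : Type*} (s : Finset ι) (F : ι → Ω → ℝ) :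
    expec (fun ω => ∑ i ∈ s, F i ω) = ∑ i ∈ s, expec (F i) := by
  simp only [expec, mul_sum]; exact sum_comm

theorem expec_const [Nonempty Ω] (a : ℝ) : expec (fun _ : Ω => a) = a := by
  simp [expec]

theorem expec_mono {F G : Ω → ℝ} (h : ∀ ω, F ω ≤ G ω) : expec F ≤ expec G :=
  mul_le_mul_of_nonneg_left (sum_le_sum fun ω _ => h ω) (by positivity)

theorem expec_nonneg {F : Ω → ℝ} (h : ∀ ω, 0 ≤ F ω) : 0 ≤ expec F :=
  mul_nonneg (by positivity) (sum_nonneg fun ω _ => h ω)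

theorem expec_prod {Ω' : Type*} [Fintype Ω'] (F : Ω × Ω' → ℝ) :
    expec F = expec fun ω' => expec fun ω => F (ω, ω') := by
  simp only [expec, Fintype.card_prod, Nat.cast_mul, mul_inv, Fintype.sum_prod_type, mul_sum]
  rw [sum_comm]
  exact sum_congr rfl fun _ _ => sum_congr rfl fun _ _ => by ring

theorem expec_fin (m : ℕ) (F : ℕ → ℝ) :
    expec (fun t : Fin (m + 1) => F t) = ((m : ℝ) + 1)⁻¹ * ∑ t ∈ range (m + 1), F t := by
  simp [expec, Fin.sum_univ_eq_sum_range]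

theorem expec_update {ι α : Type*} [Fintype ι] [DecidableEq ι] [Fintype α] (k : ι)
    (G : (ι → α) → ℝ) :
    expec G = expec fun ω => expec fun a => G (Function.update ω k a) := by
  let swap : (ι → α) × α → (ι → α) × α := fun p => (Function.update p.1 k p.2, p.1 k)
  have hswap : Function.Involutive swap := fun p => by simp [swap]
  have key : ∑ p : (ι → α) × α, G (swap p).1 = ∑ p : (ι → α) × α, G p.1 :=
    Equiv.sum_comp hswap.toPerm (fun p => G p.1)
  simp only [expec, Fintype.sum_prod_type, sum_const, card_univ, nsmul_eq_mul, swap] at key ⊢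
  rcases isEmpty_or_nonempty α
  · have : IsEmpty (ι → α) := ⟨fun ω => isEmptyElim (ω k)⟩
    simp
  rw [← mul_sum, key, ← mul_sum]
  field_simp

end Expectation

section Batch

variable {n b : ℕ}

theorem card_batch : Fintype.card (Batch n b) = n.choose b := by
  rw [show Fintype.card (Batch n b) = Fintype.card {s : Finset (Fin n) // #s = b} from rfl,
    Fintype.card_subtype, ← powerset_univ, ← powersetCard_eq_filter, card_powersetCard,
    card_univ, Fintype.card_fin]

theorem batch_nonempty (hbn : b ≤ n) : Nonempty (Batch n b) :=
  let ⟨S, _, hS⟩ := exists_subset_card_eq (s := (univ : Finset (Fin n))) (by simpa using hbn)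
  ⟨⟨S, hS⟩⟩

theorem expec_batch (F : Finset (Fin n) → ℝ) :
    expec (fun S : Batch n b => F S.1)
      = (n.choose b : ℝ)⁻¹ * ∑ S ∈ powersetCard b univ, F S := by
  rw [expec, card_batch]
  exact congrArg _ (sum_subtype _ (fun _ => mem_powersetCard_univ) F).symm

theorem expec_batch_superset (hbn : b ≤ n) (T : Finset (Fin n)) :
    expec (fun S : Batch n b => if T ⊆ S.1 then 1 else 0)
      = (b.descFactorial #T : ℝ) / n.descFactorial #T := by
  have hchoose : (n.choose b : ℝ) ≠ 0 := by exact_mod_cast (Nat.choose_pos hbn).ne'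
  have hdesc : (n.descFactorial #T : ℝ) ≠ 0 := by
    exact_mod_cast (Nat.descFactorial_pos.2 (by simpa using card_le_univ T)).ne'
  have hcount := card_filter_superset_powersetCard_mul_descFactorial (subset_univ T) b
  rw [card_univ, Fintype.card_fin] at hcount
  rw [expec_batch fun S => if T ⊆ S then 1 else 0, ← sum_filter, sum_const, nsmul_one,
    eq_div_iff hdesc, inv_mul_eq_div, div_mul_eq_mul_div, div_eq_iff hchoose,
    mul_comm _ (n.choose b : ℝ)]
  exact_mod_cast hcount

variable {E : Type*} [NormedAddCommGroup E] [InnerProductSpace ℝ E]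

theorem sum_eq_sum_ite_singleton_subset {M : Type*} [AddCommMonoid M] (S : Finset (Fin n))
    (X : Fin n → M) : ∑ i ∈ S, X i = ∑ i, if {i} ⊆ S then X i else 0 := by
  simp only [singleton_subset_iff, sum_ite_mem, univ_inter]

theorem norm_sq_sum_eq_sum_ite_pair_subset (S : Finset (Fin n)) (X : Fin n → E) :
    ‖∑ i ∈ S, X i‖ ^ 2
      = ∑ i, ∑ j, (if {i, j} ⊆ S then 1 else 0) * ⟪X i, X j⟫ := by
  rw [← real_inner_self_eq_norm_sq, sum_eq_sum_ite_singleton_subset, sum_inner]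
  refine sum_congr rfl fun i _ => ?_
  rw [sum_eq_sum_ite_singleton_subset, inner_sum]
  refine sum_congr rfl fun j _ => ?_
  by_cases hi : i ∈ S <;> by_cases hj : j ∈ S <;> simp [hi, hj, insert_subset_iff]

theorem expec_inner_batch_mean (hb : 1 ≤ b) (hbn : b ≤ n) (a : E) (X : Fin n → E) :
    expec (fun S : Batch n b => ⟪a, (b : ℝ)⁻¹ • ∑ i ∈ S.1, X i⟫)
      = ⟪a, (n : ℝ)⁻¹ • ∑ i, X i⟫ := by
  have hb0 : (b : ℝ) ≠ 0 := Nat.cast_ne_zero.2 (by omega)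
  have hn0 : (n : ℝ) ≠ 0 := Nat.cast_ne_zero.2 (by omega)
  have hinner (S : Finset (Fin n)) : ⟪a, (b : ℝ)⁻¹ • ∑ i ∈ S, X i⟫
      = (b : ℝ)⁻¹ * ∑ i, (if {i} ⊆ S then 1 else 0) * ⟪a, X i⟫ := by
    rw [real_inner_smul_right, sum_eq_sum_ite_singleton_subset, inner_sum]
    simp only [ite_mul, one_mul, zero_mul, apply_ite (inner ℝ a), inner_zero_right]
  simp only [hinner, expec_const_mul, expec_sum, expec_mul_const, expec_batch_superset hbn,
    card_singleton, Nat.descFactorial_one, real_inner_smul_right, inner_sum, ← mul_sum]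
  field_simp

/-- The mean of a uniform `b`-subset of `n` points has this factor times the variance of a single
uniformly drawn point. -/
def batchVarianceFactor (n b : ℕ) : ℝ := ((n : ℝ) - b) / (b * ((n : ℝ) - 1))

theorem batchVarianceFactor_nonneg (hb : 1 ≤ b) (hbn : b ≤ n) : 0 ≤ batchVarianceFactor n b :=
  div_nonneg (sub_nonneg.2 (Nat.cast_le.2 hbn))
    (mul_nonneg (Nat.cast_nonneg b) (sub_nonneg.2 (Nat.one_le_cast.2 (hb.trans hbn))))

theorem expec_batch_pair (hbn : b ≤ n) (i j : Fin n) :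
    expec (fun S : Batch n b => if {i, j} ⊆ S.1 then 1 else 0)
      = b * ((b : ℝ) - 1) / (n * ((n : ℝ) - 1))
        + if i = j then (b : ℝ) / n - b * ((b : ℝ) - 1) / (n * ((n : ℝ) - 1)) else 0 := by
  rw [expec_batch_superset hbn]
  by_cases hij : i = j
  · subst hij
    simp
  · simp only [card_pair hij, hij, if_false, add_zero, Nat.cast_descFactorial_two]

theorem expec_norm_sq_batch_mean (hn : 2 ≤ n) (hb : 1 ≤ b) (hbn : b ≤ n) (X : Fin n → E) :
    expec (fun S : Batch n b => ‖(b : ℝ)⁻¹ • ∑ i ∈ S.1, X i‖ ^ 2)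
      = ‖(n : ℝ)⁻¹ • ∑ i, X i‖ ^ 2
        + batchVarianceFactor n b
          * ((n : ℝ)⁻¹ * ∑ i, ‖X i‖ ^ 2 - ‖(n : ℝ)⁻¹ • ∑ i, X i‖ ^ 2) := by
  have hb0 : (b : ℝ) ≠ 0 := Nat.cast_ne_zero.2 (by omega)
  have hn0 : (n : ℝ) ≠ 0 := Nat.cast_ne_zero.2 (by omega)
  have hn1 : (n : ℝ) - 1 ≠ 0 := sub_ne_zero.2 (by norm_cast; omega)
  calc _ = (b : ℝ)⁻¹ ^ 2 * ∑ i, ∑ j,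
        expec (fun S : Batch n b => if {i, j} ⊆ S.1 then 1 else 0) * ⟪X i, X j⟫ := by
        simp only [norm_smul, mul_pow, norm_inv, Real.norm_natCast, expec_const_mul, expec_sum,
          norm_sq_sum_eq_sum_ite_pair_subset, expec_mul_const]
    _ = (b : ℝ)⁻¹ ^ 2 * (b * ((b : ℝ) - 1) / (n * ((n : ℝ) - 1)) * ‖∑ i, X i‖ ^ 2
          + ((b : ℝ) / n - b * ((b : ℝ) - 1) / (n * ((n : ℝ) - 1)))
            * ∑ i, ‖X i‖ ^ 2) := by
        simp only [expec_batch_pair hbn, add_mul, sum_add_distrib, ite_mul, zero_mul,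
          sum_ite_eq, mem_univ, if_true, ← mul_sum, real_inner_self_eq_norm_sq, ← inner_sum,
          ← sum_inner]
    _ = _ := by
        rw [norm_smul, mul_pow, norm_inv, Real.norm_natCast, batchVarianceFactor]
        field_simp
        ring

theorem expec_norm_sq_sub_batch_mean (hn : 2 ≤ n) (hb : 1 ≤ b) (hbn : b ≤ n) (c : E)
    (X : Fin n → E) :
    expec (fun S : Batch n b => ‖c - (b : ℝ)⁻¹ • ∑ i ∈ S.1, X i‖ ^ 2)
      = ‖c - (n : ℝ)⁻¹ • ∑ i, X i‖ ^ 2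
        + batchVarianceFactor n b
          * ((n : ℝ)⁻¹ * ∑ i, ‖X i‖ ^ 2 - ‖(n : ℝ)⁻¹ • ∑ i, X i‖ ^ 2) := by
  have : Nonempty (Batch n b) := batch_nonempty hbn
  simp only [norm_sub_sq_real, expec_add, expec_sub, expec_const, expec_const_mul,
    expec_inner_batch_mean hb hbn, expec_norm_sq_batch_mean hn hb hbn]
  ring

end Batch

section Smooth

variable {F : Type*} [NormedAddCommGroup F] [InnerProductSpace ℝ F] [CompleteSpace F]

theorem hasGradientAt_const_mul_sum {ι : Type*} [Fintype ι] {f : ι → F → ℝ}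
    (hf : ∀ i, Differentiable ℝ (f i)) (c : ℝ) (x : F) :
    HasGradientAt (fun w => c * ∑ i, f i w) (c • ∑ i, gradient (f i) x) x := by
  rw [hasGradientAt_iff_hasFDerivAt, map_smul, map_sum]
  simp only [toDual_gradient]
  exact (HasFDerivAt.fun_sum fun i _ => (hf i x).hasFDerivAt).const_mul c

theorem gradient_const_mul_sum {ι : Type*} [Fintype ι] {f : ι → F → ℝ}
    (hf : ∀ i, Differentiable ℝ (f i)) (c : ℝ) (x : F) :
    gradient (fun w => c * ∑ i, f i w) x = c • ∑ i, gradient (f i) x :=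
  (hasGradientAt_const_mul_sum hf c x).gradient

theorem le_add_inner_gradient_add_half_mul_sq {g : F → ℝ} {L : ℝ} (hg : Differentiable ℝ g)
    (hlip : ∀ x y, ‖gradient g x - gradient g y‖ ≤ L * ‖x - y‖) (x y : F) :
    g y ≤ g x + ⟪gradient g x, y - x⟫ + L / 2 * ‖y - x‖ ^ 2 := by
  let φ : ℝ → ℝ := fun t => g (x + t • (y - x)) - t * ⟪gradient g x, y - x⟫
    - L / 2 * t ^ 2 * ‖y - x‖ ^ 2
  have hφ (t : ℝ) : HasDerivAt φ (⟪gradient g (x + t • (y - x)), y - x⟫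
      - ⟪gradient g x, y - x⟫ - L * t * ‖y - x‖ ^ 2) t := by
    have hline : HasDerivAt (fun t : ℝ => x + t • (y - x)) (y - x) t := by
      simpa using ((hasDerivAt_id t).smul_const (y - x)).const_add x
    have hcomp := (hg _).hasGradientAt.hasFDerivAt.comp_hasDerivAt t hline
    rw [InnerProductSpace.toDual_apply_apply] at hcomp
    exact ((hcomp.sub ((hasDerivAt_id t).mul_const ⟪gradient g x, y - x⟫)).sub
      (((hasDerivAt_pow 2 t).const_mul (L / 2)).mul_const (‖y - x‖ ^ 2))).congr_deriv (by ring)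
  have hanti : AntitoneOn φ (Set.Ici 0) := by
    refine antitoneOn_of_hasDerivWithinAt_nonpos (convex_Ici 0)
      (fun t _ => (hφ t).continuousAt.continuousWithinAt) (fun t _ => (hφ t).hasDerivWithinAt)
      fun t ht => ?_
    rw [interior_Ici, Set.mem_Ioi] at ht
    have hstep := hlip (x + t • (y - x)) x
    rw [add_sub_cancel_left, norm_smul, Real.norm_of_nonneg ht.le] at hstep
    have := real_inner_le_norm (gradient g (x + t • (y - x)) - gradient g x) (y - x)
    rw [inner_sub_left] at this
    nlinarith [norm_nonneg (y - x)]
  have := hanti (Set.mem_Ici.2 le_rfl) (Set.mem_Ici.2 zero_le_one) zero_le_one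
  simp only [φ, zero_smul, one_smul, add_zero, add_sub_cancel, zero_mul, one_mul, sub_zero,
    one_pow, mul_one, ne_eq, OfNat.ofNat_ne_zero, not_false_eq_true, zero_pow, mul_zero] at this
  linarith

theorem apply_sub_smul_le {g : F → ℝ} {L : ℝ} (hg : Differentiable ℝ g)
    (hlip : ∀ x y, ‖gradient g x - gradient g y‖ ≤ L * ‖x - y‖) (η : ℝ) (x v : F) :
    g (x - η • v) ≤ g x - η / 2 * ‖gradient g x‖ ^ 2 - η / 2 * (1 - L * η) * ‖v‖ ^ 2
      + η / 2 * ‖gradient g x - v‖ ^ 2 := by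
  have h := le_add_inner_gradient_add_half_mul_sq hg hlip x (x - η • v)
  rw [sub_sub_cancel_left, inner_neg_right, real_inner_smul_right, norm_neg, norm_smul,
    Real.norm_eq_abs, mul_pow, sq_abs] at h
  linear_combination h - η / 2 * norm_sub_sq_real (gradient g x) v

theorem norm_gradient_average_sub_le {n : ℕ} (hn : n ≠ 0) {f : Fin n → F → ℝ}
    (hf : ∀ i, Differentiable ℝ (f i)) {L : ℝ}
    (hsmooth : ∀ i x y, ‖gradient (f i) x - gradient (f i) y‖ ≤ L * ‖x - y‖) (x y : F) :
    ‖gradient (fun w => (n : ℝ)⁻¹ * ∑ i, f i w) x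
      - gradient (fun w => (n : ℝ)⁻¹ * ∑ i, f i w) y‖ ≤ L * ‖x - y‖ := by
  rw [gradient_const_mul_sum hf, gradient_const_mul_sum hf, ← smul_sub, ← sum_sub_distrib,
    norm_smul, norm_inv, Real.norm_natCast, inv_mul_le_iff₀ (by positivity)]
  calc ‖∑ i, (gradient (f i) x - gradient (f i) y)‖
      ≤ ∑ i, ‖gradient (f i) x - gradient (f i) y‖ := norm_sum_le _ _
    _ ≤ ∑ _i : Fin n, L * ‖x - y‖ := sum_le_sum fun i _ => hsmooth i x y
    _ = n * (L * ‖x - y‖) := by simp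

end Smooth

theorem sum_range_le_mul_sum_of_le_add {κ : ℝ} {m : ℕ} {α β : ℕ → ℝ} (hκ : 0 ≤ κ)
    (hβ : ∀ t, 0 ≤ β t) (hα0 : α 0 = 0) (hα : ∀ t < m, α (t + 1) ≤ α t + κ * β t) :
    ∑ t ∈ range (m + 1), α t ≤ m * κ * ∑ t ∈ range (m + 1), β t := by
  have hpartial : ∀ t ≤ m, α t ≤ κ * ∑ j ∈ range t, β j := by
    intro t ht
    induction t with
    | zero => simp [hα0]
    | succ t ih =>
      rw [sum_range_succ, mul_add]
      linarith [hα t ht, ih (by omega)]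
  rw [sum_range_succ', hα0, add_zero]
  calc ∑ t ∈ range m, α (t + 1)
      ≤ ∑ _t ∈ range m, κ * ∑ j ∈ range (m + 1), β j := by
        refine sum_le_sum fun t ht => (hpartial (t + 1) (by simp at ht; omega)).trans ?_
        gcongr
        · exact fun j _ _ => hβ j
        · simp at ht ⊢; omega
    _ = _ := by simp; ring

theorem sum_range_le_of_descent_of_le_add {η c κ : ℝ} {m : ℕ} {p g α β : ℕ → ℝ}
    (hη : 0 ≤ η) (hκ : 0 ≤ κ) (hmκ : m * κ ≤ 1 - c) (hβ : ∀ t, 0 ≤ β t)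
    (hα0 : α 0 = 0)
    (hα : ∀ t < m, α (t + 1) ≤ α t + κ * β t)
    (hp : ∀ t, p (t + 1) ≤ p t - η / 2 * g t - η / 2 * (1 - c) * β t + η / 2 * α t) :
    η / 2 * ∑ t ∈ range (m + 1), g t ≤ p 0 - p (m + 1) := by
  have hαβ : ∑ t ∈ range (m + 1), α t ≤ (1 - c) * ∑ t ∈ range (m + 1), β t :=
    (sum_range_le_mul_sum_of_le_add hκ hβ hα0 hα).trans
      (mul_le_mul_of_nonneg_right hmκ (sum_nonneg fun t _ => hβ t))
  have htel : p (m + 1) - p 0 ≤ ∑ t ∈ range (m + 1),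
      (-(η / 2 * g t) - η / 2 * (1 - c) * β t + η / 2 * α t) := by
    rw [← sum_range_sub]
    exact sum_le_sum fun t _ => by linarith [hp t]
  simp only [sum_add_distrib, sum_sub_distrib, sum_neg_distrib, ← mul_sum] at htel
  linarith [mul_le_mul_of_nonneg_left hαβ (by positivity : 0 ≤ η / 2)]

theorem mul_sq_eq_one_sub_of_eq_two_div {L x η : ℝ} (hL : 0 < L) (hx : 0 ≤ x)
    (hη : η = 2 / (L * (Real.sqrt (1 + 4 * x) + 1))) :
    x * (L ^ 2 * η ^ 2) = 1 - L * η := by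
  have hσ := Real.sq_sqrt (by linarith : 0 ≤ 1 + 4 * x)
  have : 0 ≤ Real.sqrt (1 + 4 * x) := Real.sqrt_nonneg _
  rw [hη]
  generalize Real.sqrt (1 + 4 * x) = σ at *
  field_simp
  linear_combination -hσ

section SarahStep

variable {F : Type*} [NormedAddCommGroup F] [InnerProductSpace ℝ F] [CompleteSpace F]
  {n b : ℕ} {f : Fin n → F → ℝ} {P : F → ℝ} {L : ℝ}

theorem expec_batch_sarah_error_le (hn : 2 ≤ n) (hb : 1 ≤ b) (hbn : b ≤ n)
    (hsmooth : ∀ i x y, ‖gradient (f i) x - gradient (f i) y‖ ≤ L * ‖x - y‖)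
    (hgradP : ∀ x, gradient P x = (n : ℝ)⁻¹ • ∑ i, gradient (f i) x)
    (η : ℝ) (w v : F) :
    expec (fun S : Batch n b => ‖gradient P (w - η • v)
        - ((b : ℝ)⁻¹ • ∑ i ∈ S.1, (gradient (f i) (w - η • v) - gradient (f i) w)
          + v)‖ ^ 2)
      ≤ ‖gradient P w - v‖ ^ 2
        + batchVarianceFactor n b * (L ^ 2 * η ^ 2 * ‖v‖ ^ 2) := by
  set X : Fin n → F := fun i => gradient (f i) (w - η • v) - gradient (f i) w
  have hmean : (n : ℝ)⁻¹ • ∑ i, X i = gradient P (w - η • v) - gradient P w := by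
    simp only [X, hgradP, sum_sub_distrib, smul_sub]
  have hX (i : Fin n) : ‖X i‖ ^ 2 ≤ L ^ 2 * η ^ 2 * ‖v‖ ^ 2 := by
    have := hsmooth i (w - η • v) w
    rw [sub_sub_cancel_left, norm_neg, norm_smul, Real.norm_eq_abs] at this
    calc ‖X i‖ ^ 2 ≤ (L * (|η| * ‖v‖)) ^ 2 := pow_le_pow_left₀ (norm_nonneg _) this 2
      _ = L ^ 2 * η ^ 2 * ‖v‖ ^ 2 := by rw [mul_pow, mul_pow, sq_abs]; ring
  have hmeanSq : (n : ℝ)⁻¹ * ∑ i, ‖X i‖ ^ 2 ≤ L ^ 2 * η ^ 2 * ‖v‖ ^ 2 := by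
    have hn0 : (0 : ℝ) < n := Nat.cast_pos.2 (by omega)
    rw [inv_mul_le_iff₀ hn0]
    calc ∑ i, ‖X i‖ ^ 2 ≤ ∑ _i : Fin n, L ^ 2 * η ^ 2 * ‖v‖ ^ 2 :=
          sum_le_sum fun i _ => hX i
      _ = n * (L ^ 2 * η ^ 2 * ‖v‖ ^ 2) := by simp
  calc _ = expec (fun S : Batch n b =>
        ‖(gradient P (w - η • v) - v) - (b : ℝ)⁻¹ • ∑ i ∈ S.1, X i‖ ^ 2) := by
        simp only [X, sub_add_eq_sub_sub_swap]
    _ = ‖gradient P w - v‖ ^ 2 + batchVarianceFactor n b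
          * ((n : ℝ)⁻¹ * ∑ i, ‖X i‖ ^ 2 - ‖(n : ℝ)⁻¹ • ∑ i, X i‖ ^ 2) := by
        rw [expec_norm_sq_sub_batch_mean hn hb hbn, hmean, sub_sub_sub_cancel_left]
    _ ≤ _ := by
        gcongr
        · exact batchVarianceFactor_nonneg hb hbn
        · linarith [sq_nonneg ‖(n : ℝ)⁻¹ • ∑ i, X i‖]

end SarahStep

section SarahTrajectory

variable {d n b : ℕ} (f : Fin n → Vec d → ℝ) (w0 : Vec d) (η : ℝ)

theorem sarahState_congr {I I' : ℕ → Finset (Fin n)} {t : ℕ} (h : ∀ j ≤ t, I j = I' j) :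
    sarahState f w0 η b I t = sarahState f w0 η b I' t := by
  induction t with
  | zero => rfl
  | succ t ih =>
    simp only [sarahState, ih fun j hj => h j (by omega), h (t + 1) le_rfl]

theorem pad_update_of_ne {T : ℕ} (ω : Fin T → Batch n b) (k : Fin T) (S : Batch n b) {j : ℕ}
    (hj : j ≠ k) : pad (Function.update ω k S) j = pad ω j := by
  unfold pad
  split_ifs with h
  · rw [Function.update_of_ne (Fin.ne_of_val_ne hj)]
  · rfl

theorem pad_update_self {T : ℕ} (ω : Fin T → Batch n b) (k : Fin T) (S : Batch n b) :
    pad (Function.update ω k S) k = S.1 := by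
  simp [pad]

theorem expec_sarah_error_succ_le (hn : 2 ≤ n) (hb : 1 ≤ b) (hbn : b ≤ n) {L : ℝ}
    (hsmooth : ∀ i x y, ‖gradient (f i) x - gradient (f i) y‖ ≤ L * ‖x - y‖)
    {P : Vec d → ℝ} (hgradP : ∀ x, gradient P x = (n : ℝ)⁻¹ • ∑ i, gradient (f i) x)
    {m t : ℕ} (ht : t < m) :
    expec (fun ω : Fin (m + 1) → Batch n b =>
        ‖gradient P (sarahState f w0 η b (pad ω) (t + 1)).1
          - (sarahState f w0 η b (pad ω) (t + 1)).2‖ ^ 2)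
      ≤ expec (fun ω : Fin (m + 1) → Batch n b =>
          ‖gradient P (sarahState f w0 η b (pad ω) t).1
            - (sarahState f w0 η b (pad ω) t).2‖ ^ 2)
        + batchVarianceFactor n b * (L ^ 2 * η ^ 2)
          * expec (fun ω : Fin (m + 1) → Batch n b =>
              ‖(sarahState f w0 η b (pad ω) t).2‖ ^ 2) := by
  let k : Fin (m + 1) := ⟨t + 1, by omega⟩
  rw [expec_update k, ← expec_const_mul, ← expec_add]
  refine expec_mono fun ω => ?_
  have hnext (S : Batch n b) : sarahState f w0 η b (pad (Function.update ω k S)) (t + 1)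
      = let p := sarahState f w0 η b (pad ω) t
        (p.1 - η • p.2, (b : ℝ)⁻¹ • ∑ i ∈ S.1,
          (gradient (f i) (p.1 - η • p.2) - gradient (f i) p.1) + p.2) := by
    rw [sarahState,
      sarahState_congr f w0 η fun j hj => pad_update_of_ne ω k S (by simp [k]; omega),
      show t + 1 = (k : ℕ) from rfl, pad_update_self]
  simp only [hnext]
  convert expec_batch_sarah_error_le hn hb hbn hsmooth hgradP η _ _ using 1
  ring

theorem expec_sarah_descent {L : ℝ} {P : Vec d → ℝ} (hP : Differentiable ℝ P)
    (hlip : ∀ x y, ‖gradient P x - gradient P y‖ ≤ L * ‖x - y‖) (m t : ℕ) :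
    expec (fun ω : Fin (m + 1) → Batch n b => P (sarahState f w0 η b (pad ω) (t + 1)).1)
      ≤ expec (fun ω : Fin (m + 1) → Batch n b => P (sarahState f w0 η b (pad ω) t).1)
        - η / 2 * expec (fun ω : Fin (m + 1) → Batch n b =>
            ‖gradient P (sarahState f w0 η b (pad ω) t).1‖ ^ 2)
        - η / 2 * (1 - L * η) * expec (fun ω : Fin (m + 1) → Batch n b =>
            ‖(sarahState f w0 η b (pad ω) t).2‖ ^ 2)
        + η / 2 * expec (fun ω : Fin (m + 1) → Batch n b =>
            ‖gradient P (sarahState f w0 η b (pad ω) t).1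
              - (sarahState f w0 η b (pad ω) t).2‖ ^ 2) := by
  simp only [← expec_const_mul, ← expec_sub, ← expec_add]
  exact expec_mono fun ω => apply_sub_smul_le hP hlip η _ _

theorem expec_sarah_error_zero {P : Vec d → ℝ}
    (hgradP : ∀ x, gradient P x = (n : ℝ)⁻¹ • ∑ i, gradient (f i) x) (m : ℕ) :
    expec (fun ω : Fin (m + 1) → Batch n b =>
        ‖gradient P (sarahState f w0 η b (pad ω) 0).1
          - (sarahState f w0 η b (pad ω) 0).2‖ ^ 2)
      = 0 := by
  simp [sarahState, hgradP, expec]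

end SarahTrajectory

theorem sum_expec_norm_sq_gradient_sarahState_le {d n b : ℕ} (hn : 2 ≤ n) (hb : 1 ≤ b)
    (hbn : b ≤ n) {f : Fin n → Vec d → ℝ} (hdiff : ∀ i, Differentiable ℝ (f i))
    {L : ℝ} (hsmooth : ∀ i x y, ‖gradient (f i) x - gradient (f i) y‖ ≤ L * ‖x - y‖)
    {P : Vec d → ℝ} (hP : P = fun w => (n : ℝ)⁻¹ * ∑ i, f i w)
    {wstar : Vec d} (hmin : ∀ w, P wstar ≤ P w)
    (w0 : Vec d) {η : ℝ} (hη : 0 ≤ η) {m : ℕ}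
    (hbal : m * (batchVarianceFactor n b * (L ^ 2 * η ^ 2)) ≤ 1 - L * η) :
    η / 2 * ∑ t ∈ range (m + 1), expec (fun ω : Fin (m + 1) → Batch n b =>
        ‖gradient P (sarahState f w0 η b (pad ω) t).1‖ ^ 2)
      ≤ P w0 - P wstar := by
  have hgradP (x : Vec d) : gradient P x = (n : ℝ)⁻¹ • ∑ i, gradient (f i) x :=
    hP ▸ gradient_const_mul_sum hdiff _ x
  have hPdiff : Differentiable ℝ P :=
    hP ▸ fun x => (hasGradientAt_const_mul_sum hdiff _ x).differentiableAt
  have hPlip : ∀ x y, ‖gradient P x - gradient P y‖ ≤ L * ‖x - y‖ :=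
    hP ▸ norm_gradient_average_sub_le (by omega) hdiff hsmooth
  have : Nonempty (Batch n b) := batch_nonempty hbn
  have hlast := expec_mono fun ω : Fin (m + 1) → Batch n b =>
    hmin (sarahState f w0 η b (pad ω) (m + 1)).1
  rw [expec_const] at hlast
  refine (sum_range_le_of_descent_of_le_add (m := m)
    (p := fun t => expec fun ω : Fin (m + 1) → Batch n b =>
      P (sarahState f w0 η b (pad ω) t).1)
    (α := fun t => expec fun ω : Fin (m + 1) → Batch n b =>
      ‖gradient P (sarahState f w0 η b (pad ω) t).1
        - (sarahState f w0 η b (pad ω) t).2‖ ^ 2)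
    (β := fun t => expec fun ω : Fin (m + 1) → Batch n b =>
      ‖(sarahState f w0 η b (pad ω) t).2‖ ^ 2)
    hη (mul_nonneg (batchVarianceFactor_nonneg hb hbn) (by positivity)) hbal
    (fun t => expec_nonneg fun ω => sq_nonneg _) (expec_sarah_error_zero f w0 η hgradP m)
    (fun t ht => expec_sarah_error_succ_le f w0 η hn hb hbn hsmooth hgradP ht)
    (expec_sarah_descent f w0 η hPdiff hPlip m)).trans ?_
  exact sub_le_sub (expec_const (P w0)).le hlast

/-- **Corollary 3 of SARAH (nonconvex).** One inner loop of SARAH with the extremal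
learning rate `η = 2/(L(√(1 + (4m/b)((n−b)/(n−1))) + 1))` and output chosen uniformly
among `w_0,…,w_m` satisfies
`E‖∇P(w̃)‖² ≤ L(√(1 + (4m/b)((n−b)/(n−1))) + 1)/(m+1)·(P(w₀) − P(w⋆))`. -/
theorem sarah_in_convergence_exact_eta
    {d n : ℕ} (hn : 2 ≤ n)
    (f : Fin n → Vec d → ℝ) (L : ℝ) (hL : 0 < L)
    (hdiff : ∀ i, Differentiable ℝ (f i))
    (hsmooth : ∀ i (w w' : Vec d),
      ‖gradient (f i) w - gradient (f i) w'‖ ≤ L * ‖w - w'‖)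
    (P : Vec d → ℝ) (hP : P = fun w => (n : ℝ)⁻¹ * ∑ i, f i w)
    (wstar : Vec d) (hmin : ∀ w, P wstar ≤ P w)
    (w0 : Vec d) (η : ℝ) (b m : ℕ) (hb : 1 ≤ b) (hbn : b ≤ n)
    (hηdef : η = 2 / (L * (Real.sqrt (1 + 4 * (m : ℝ) / (b : ℝ)
      * (((n : ℝ) - (b : ℝ)) / ((n : ℝ) - 1))) + 1))) :
    expec (fun p : (Fin (m + 1) → Batch n b) × Fin (m + 1) =>
        ‖gradient P ((sarahState f w0 η b (pad p.1) (p.2 : ℕ)).1)‖ ^ 2)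
      ≤ L * (Real.sqrt (1 + 4 * (m : ℝ) / (b : ℝ)
          * (((n : ℝ) - (b : ℝ)) / ((n : ℝ) - 1))) + 1) / ((m : ℝ) + 1)
          * (P w0 - P wstar) := by
  have hρ := batchVarianceFactor_nonneg hb hbn
  have harg : 4 * (m : ℝ) / b * (((n : ℝ) - b) / ((n : ℝ) - 1))
      = 4 * (m * batchVarianceFactor n b) := by
    rw [batchVarianceFactor, div_mul_div_comm]; ring
  rw [harg] at hηdef ⊢
  have hη : 0 < η := by rw [hηdef]; positivity
  have hbal := mul_sq_eq_one_sub_of_eq_two_div hL (mul_nonneg (Nat.cast_nonneg m) hρ) hηdef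
  rw [mul_assoc] at hbal
  have hsum := sum_expec_norm_sq_gradient_sarahState_le hn hb hbn hdiff hsmooth hP hmin w0
    hη.le hbal.le
  have : Nonempty (Batch n b) := batch_nonempty hbn
  calc _ = ((m : ℝ) + 1)⁻¹ * ∑ t ∈ range (m + 1),
          expec (fun ω : Fin (m + 1) → Batch n b =>
            ‖gradient P (sarahState f w0 η b (pad ω) t).1‖ ^ 2) := by
        rw [expec_prod, ← expec_fin]
    _ ≤ ((m : ℝ) + 1)⁻¹ * (2 / η * (P w0 - P wstar)) := by
        gcongr
        rw [div_mul_eq_mul_div, le_div_iff₀ hη]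
        linarith
    _ = _ := by rw [hηdef]; field_simp
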